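/- arXiv:2305.08350 — 2 statements merged into one kernel-verified Lean document; each statement's English description precedes it below -/
import Mathlib

section
/- Let (Zₙ) be a sequence of real random variables adapted to a filtration (Hₙ), with conditional means μₙ = E[Zₙ | H_{n−1}] and conditional cumulant generating functions ψₙ(λ) = log E[exp(λ(Zₙ − μₙ)) | H_{n−1}] assumed finite for all λ. Then for all x ≥ 0 and λ ≥ 0, with probability at least 1 − e^{−x}, for every K ∈ ℕ simultaneously: ∑_{i=1}^K λ·Zᵢ ≤ x + ∑_{i=1}^K (λ·μᵢ + ψᵢ(λ)). -/
/-!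
With `μᵢ = 𝔼[Zᵢ | ℱᵢ]` and `ψᵢ(λ) = log 𝔼[exp (λ (Zᵢ - μᵢ)) | ℱᵢ]`, the products
`M_K = ∏_{i<K} exp (λ (Zᵢ - μᵢ) - ψᵢ(λ))` form a positive martingale with `M_0 = 1`: each factor has
conditional expectation `1`, and is integrable because `ψᵢ(λ) ≥ 0` by conditional Jensen. The `K`-th
inequality fails exactly when `M_K > e^x`, and by Ville's inequality (Doob's maximal inequality with
the horizon sent to infinity) `M` reaches `e^x` with probability at most `e^{-x}`.
-/

open MeasureTheory Finset Filter ProbabilityTheory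
open scoped NNReal ENNReal

namespace MeasureTheory

variable {Ω : Type*} {m m0 : MeasurableSpace Ω} {μ : Measure Ω}

theorem Martingale.mul_measure_exists_le_le_integral [IsFiniteMeasure μ]
    {ℱ : Filtration ℕ m0} {f : ℕ → Ω → ℝ} (hf : Martingale f ℱ μ) (hf0 : 0 ≤ f) (ε : ℝ≥0) :
    ε * μ {ω | ∃ k, (ε : ℝ) ≤ f k ω} ≤ ENNReal.ofReal (∫ ω, f 0 ω ∂μ) := by
  have hmax : ∀ n, ε * μ {ω | ∃ k ≤ n, (ε : ℝ) ≤ f k ω} ≤ ENNReal.ofReal (∫ ω, f 0 ω ∂μ) := by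
    intro n
    have hset : {ω | ∃ k ≤ n, (ε : ℝ) ≤ f k ω} =
        {ω | (ε : ℝ) ≤ (range (n + 1)).sup' nonempty_range_add_one fun k => f k ω} := by
      ext ω
      simp [Finset.le_sup'_iff]
    rw [hset]
    refine (maximal_ineq hf.submartingale hf0 n).trans (ENNReal.ofReal_le_ofReal ?_)
    calc _ ≤ ∫ ω, f n ω ∂μ :=
          setIntegral_le_integral (hf.integrable n) (Eventually.of_forall (hf0 n))
      _ = ∫ ω, f 0 ω ∂μ := by
          simpa using (hf.setIntegral_eq (Nat.zero_le n) MeasurableSet.univ).symm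
  have hmono : Monotone fun n => {ω | ∃ k ≤ n, (ε : ℝ) ≤ f k ω} :=
    fun n n' hnn' ω ⟨k, hk, hkω⟩ => ⟨k, hk.trans hnn', hkω⟩
  have hunion : {ω | ∃ k, (ε : ℝ) ≤ f k ω} = ⋃ n, {ω | ∃ k ≤ n, (ε : ℝ) ≤ f k ω} := by
    ext ω
    simp only [Set.mem_ofPred_eq, Set.mem_iUnion]
    exact ⟨fun ⟨k, hk⟩ => ⟨k, k, le_rfl, hk⟩, fun ⟨_, k, _, hk⟩ => ⟨k, hk⟩⟩
  rw [hunion, hmono.measure_iUnion, ENNReal.mul_iSup]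
  exact iSup_le hmax

theorem Martingale.ofReal_one_sub_exp_neg_le_measure_forall_lt_exp [IsProbabilityMeasure μ]
    {ℱ : Filtration ℕ m0} {f : ℕ → Ω → ℝ} (hf : Martingale f ℱ μ) (hf0 : 0 ≤ f)
    (hf_zero : ∫ ω, f 0 ω ∂μ = 1) (x : ℝ) :
    ENNReal.ofReal (1 - Real.exp (-x)) ≤ μ {ω | ∀ k, f k ω < Real.exp x} := by
  set S := {ω | ∃ k, Real.exp x ≤ f k ω}
  have hS : μ S ≤ ENNReal.ofReal (Real.exp (-x)) := by
    have h := hf.mul_measure_exists_le_le_integral hf0 (Real.exp x).toNNReal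
    rw [Real.coe_toNNReal _ (Real.exp_pos x).le, hf_zero, ENNReal.ofReal_one] at h
    rw [Real.exp_neg, ENNReal.ofReal_inv_of_pos (Real.exp_pos x), ENNReal.le_inv_iff_mul_le,
      mul_comm]
    exact h
  have hcompl : {ω | ∀ k, f k ω < Real.exp x} = Sᶜ := by
    ext ω
    simp [S]
  rw [hcompl, ENNReal.ofReal_sub _ (Real.exp_pos _).le, ENNReal.ofReal_one, tsub_le_iff_left]
  calc (1 : ℝ≥0∞) = μ (S ∪ Sᶜ) := by rw [Set.union_compl_self, measure_univ]
    _ ≤ μ S + μ Sᶜ := measure_union_le S Sᶜ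
    _ ≤ ENNReal.ofReal (Real.exp (-x)) + μ Sᶜ := by gcongr

theorem lintegral_mul_ofReal_condExp (hm : m ≤ m0) [SigmaFinite (μ.trim hm)] {f : Ω → ℝ}
    (hf : Integrable f μ) (hf0 : 0 ≤ᵐ[μ] f) {g : Ω → ℝ≥0∞} (hg : Measurable[m] g) :
    ∫⁻ ω, g ω * ENNReal.ofReal (f ω) ∂μ = ∫⁻ ω, g ω * ENNReal.ofReal (μ[f|m] ω) ∂μ := by
  -- The densities `f` and `𝔼[f|m]` give measures that agree on `m`, hence on `m`-measurable `g`.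
  set ν := μ.withDensity fun ω => ENNReal.ofReal (f ω)
  set ν' := μ.withDensity fun ω => ENNReal.ofReal (μ[f|m] ω)
  have htrim : ν.trim hm = ν'.trim hm := by
    refine @Measure.ext Ω m _ _ fun s hs => ?_
    rw [trim_measurableSet_eq hm hs, trim_measurableSet_eq hm hs,
      withDensity_apply _ (hm s hs), withDensity_apply _ (hm s hs),
      ← ofReal_integral_eq_lintegral_ofReal hf.integrableOn (ae_restrict_of_ae hf0),
      ← ofReal_integral_eq_lintegral_ofReal integrable_condExp.integrableOn
        (ae_restrict_of_ae (condExp_nonneg hf0)),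
      setIntegral_condExp hm hf hs]
  have hg0 : Measurable g := hg.mono hm le_rfl
  calc ∫⁻ ω, g ω * ENNReal.ofReal (f ω) ∂μ = ∫⁻ ω, g ω ∂ν := by
        rw [lintegral_withDensity_eq_lintegral_mul₀ hf.1.aemeasurable.ennreal_ofReal
          hg0.aemeasurable]
        simp only [Pi.mul_apply, mul_comm]
    _ = ∫⁻ ω, g ω ∂ν' := by rw [← lintegral_trim hm hg, htrim, lintegral_trim hm hg]
    _ = ∫⁻ ω, g ω * ENNReal.ofReal (μ[f|m] ω) ∂μ := by
        rw [lintegral_withDensity_eq_lintegral_mul₀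
          integrable_condExp.1.aemeasurable.ennreal_ofReal hg0.aemeasurable]
        simp only [Pi.mul_apply, mul_comm]

theorem martingale_prod_of_condExp_eq_one [IsFiniteMeasure μ] {ℱ : Filtration ℕ m0}
    {Y : ℕ → Ω → ℝ} (hY_meas : ∀ n, StronglyMeasurable[ℱ (n + 1)] (Y n)) (hY_nonneg : ∀ n, 0 ≤ Y n)
    (hY_int : ∀ n, Integrable (Y n) μ) (hY_cond : ∀ n, μ[Y n|ℱ n] =ᵐ[μ] 1) :
    Martingale (fun K ω => ∏ i ∈ range K, Y i ω) ℱ μ := by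
  set M : ℕ → Ω → ℝ := fun K ω => ∏ i ∈ range K, Y i ω
  have hadapted : StronglyAdapted ℱ M := fun K => by
    simpa only [M, ← Finset.prod_apply] using Finset.stronglyMeasurable_prod _ fun i hi =>
      (hY_meas i).mono (ℱ.mono (Nat.succ_le_of_lt (mem_range.1 hi)))
  have hM_nonneg : ∀ K, 0 ≤ M K := fun K ω => prod_nonneg fun i _ => hY_nonneg i ω
  have hM_succ : ∀ K, M (K + 1) = M K * Y K := fun K => funext fun ω => prod_range_succ _ _
  have hM_int : ∀ K, Integrable (M K) μ := by
    intro K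
    induction K with
    | zero => simp [M]
    | succ K ih =>
      rw [← lintegral_ofReal_ne_top_iff_integrable
        ((hadapted (K + 1)).mono (ℱ.le _)).aestronglyMeasurable
        (Eventually.of_forall (hM_nonneg (K + 1)))]
      calc ∫⁻ ω, ENNReal.ofReal (M (K + 1) ω) ∂μ
          = ∫⁻ ω, ENNReal.ofReal (M K ω) * ENNReal.ofReal (Y K ω) ∂μ := by
            simp only [hM_succ, Pi.mul_apply, ENNReal.ofReal_mul (hM_nonneg K _)]
        _ = ∫⁻ ω, ENNReal.ofReal (M K ω) * ENNReal.ofReal (μ[Y K|ℱ K] ω) ∂μ :=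
            lintegral_mul_ofReal_condExp (ℱ.le K) (hY_int K)
              (Eventually.of_forall (hY_nonneg K)) (hadapted K).measurable.ennreal_ofReal
        _ = ∫⁻ ω, ENNReal.ofReal (M K ω) ∂μ := by
            refine lintegral_congr_ae ?_
            filter_upwards [hY_cond K] with ω hω
            simp [hω]
        _ ≠ ∞ := (lintegral_ofReal_ne_top_iff_integrable ih.1
            (Eventually.of_forall (hM_nonneg K))).2 ih
  refine martingale_nat hadapted hM_int fun K => ?_
  rw [hM_succ]
  have hpull := condExp_mul_of_stronglyMeasurable_left (hadapted K)
    (hM_succ K ▸ hM_int (K + 1)) (hY_int K)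
  filter_upwards [hpull, hY_cond K] with ω hpullω hYω
  simp [hpullω, hYω]

section ExponentialMoments

variable {X : Ω → ℝ}

theorem integrable_of_forall_integrable_exp_mul
    (hX : ∀ t, Integrable (fun ω => Real.exp (t * X ω)) μ) : Integrable X μ := by
  simpa using integrable_pow_of_integrable_exp_mul one_ne_zero (hX 1) (hX (-1)) 1

theorem exp_mul_condExp_le_condExp_exp_mul (hm : m ≤ m0) [SigmaFinite (μ.trim hm)]
    (hX : ∀ t, Integrable (fun ω => Real.exp (t * X ω)) μ) (t : ℝ) :
    (fun ω => Real.exp (t * μ[X|m] ω)) ≤ᵐ[μ] μ[fun ω => Real.exp (t * X ω)|m] := by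
  have hX_int := integrable_of_forall_integrable_exp_mul hX
  have hjensen := convexOn_exp.map_condExp_le_univ hm Real.continuous_exp.lowerSemicontinuous
    (hX_int.const_mul t) (hX t)
  filter_upwards [hjensen, condExp_smul (m := m) (μ := μ) t X] with ω hω hsmul
  simpa [Function.comp_def, ← smul_eq_mul, ← Pi.smul_def, hsmul] using hω

theorem integrable_exp_mul_condExp (hm : m ≤ m0) [SigmaFinite (μ.trim hm)]
    (hX : ∀ t, Integrable (fun ω => Real.exp (t * X ω)) μ) (t : ℝ) :
    Integrable (fun ω => Real.exp (t * μ[X|m] ω)) μ := by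
  refine (integrable_condExp (m := m) (f := fun ω => Real.exp (t * X ω))).mono'
    ((stronglyMeasurable_condExp.mono hm).measurable.const_mul t).exp.aestronglyMeasurable ?_
  filter_upwards [exp_mul_condExp_le_condExp_exp_mul hm hX t] with ω hω
  rwa [Real.norm_eq_abs, abs_of_pos (Real.exp_pos _)]

noncomputable def centeredExp (μ : Measure Ω) (m : MeasurableSpace Ω) (X : Ω → ℝ) (t : ℝ) :
    Ω → ℝ :=
  fun ω => Real.exp (t * (X ω - μ[X|m] ω))

theorem integrable_centeredExp (hm : m ≤ m0) [SigmaFinite (μ.trim hm)]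
    (hX : ∀ t, Integrable (fun ω => Real.exp (t * X ω)) μ) (t : ℝ) :
    Integrable (centeredExp μ m X t) μ := by
  have hX_int := integrable_of_forall_integrable_exp_mul hX
  have hmeas : AEStronglyMeasurable (centeredExp μ m X t) μ :=
    Real.continuous_exp.comp_aestronglyMeasurable
      ((hX_int.1.sub integrable_condExp.1).const_mul t)
  refine ((hX (2 * t)).add (integrable_exp_mul_condExp hm hX (-(2 * t)))).mono' hmeas
    (Eventually.of_forall fun ω => ?_)
  have hAMGM : ∀ a b : ℝ, Real.exp (a + b) ≤ Real.exp (2 * a) + Real.exp (2 * b) := fun a b => by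
    rw [Real.exp_add, two_mul, two_mul, Real.exp_add, Real.exp_add]
    nlinarith [two_mul_le_add_sq (Real.exp a) (Real.exp b), Real.exp_pos a, Real.exp_pos b]
  calc ‖centeredExp μ m X t ω‖ = Real.exp (t * X ω + -(t * μ[X|m] ω)) := by
        rw [Real.norm_eq_abs, centeredExp, Real.abs_exp]; ring_nf
    _ ≤ Real.exp (2 * t * X ω) + Real.exp (-(2 * t) * μ[X|m] ω) := by
        convert hAMGM (t * X ω) (-(t * μ[X|m] ω)) using 3 <;> ring

theorem one_le_condExp_centeredExp (hm : m ≤ m0) [SigmaFinite (μ.trim hm)]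
    (hX : ∀ t, Integrable (fun ω => Real.exp (t * X ω)) μ) (t : ℝ) :
    1 ≤ᵐ[μ] μ[centeredExp μ m X t|m] := by
  have hX_int := integrable_of_forall_integrable_exp_mul hX
  have hcentered : μ[t • (X - μ[X|m])|m] =ᵐ[μ] 0 := by
    filter_upwards [condExp_smul (m := m) (μ := μ) t (X - μ[X|m]),
      condExp_sub (m := m) hX_int (integrable_condExp (m := m) (f := X))] with ω hsmul hsub
    simp [hsmul, hsub, condExp_of_stronglyMeasurable hm stronglyMeasurable_condExp
      integrable_condExp]
  have hjensen := convexOn_exp.map_condExp_le_univ hm Real.continuous_exp.lowerSemicontinuous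
    ((hX_int.sub integrable_condExp).const_mul t) (integrable_centeredExp hm hX t)
  filter_upwards [hjensen, hcentered] with ω hω h0
  calc (1 : ℝ) = Real.exp (μ[t • (X - μ[X|m])|m] ω) := by rw [h0, Pi.zero_apply, Real.exp_zero]
    _ ≤ μ[centeredExp μ m X t|m] ω := hω

noncomputable def condCenteredCgf (μ : Measure Ω) (m : MeasurableSpace Ω) (X : Ω → ℝ) (t : ℝ) :
    Ω → ℝ :=
  fun ω => Real.log (μ[centeredExp μ m X t|m] ω)

-- `exp (t (X - 𝔼[X|m])) / 𝔼[exp (t (X - 𝔼[X|m])) | m]`, written through the logarithm so that it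
-- is positive everywhere and not only almost everywhere.
noncomputable def normalizedCenteredExp (μ : Measure Ω) (m : MeasurableSpace Ω) (X : Ω → ℝ)
    (t : ℝ) : Ω → ℝ :=
  fun ω => Real.exp (t * (X ω - μ[X|m] ω) - condCenteredCgf μ m X t ω)

theorem normalizedCenteredExp_pos (t : ℝ) (ω : Ω) : 0 < normalizedCenteredExp μ m X t ω :=
  Real.exp_pos _

theorem stronglyMeasurable_normalizedCenteredExp {m' : MeasurableSpace Ω} (hmm' : m ≤ m')
    (hX : StronglyMeasurable[m'] X) (t : ℝ) :
    StronglyMeasurable[m'] (normalizedCenteredExp μ m X t) := by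
  have hcond : ∀ f : Ω → ℝ, Measurable[m'] (μ[f|m]) := fun f =>
    (stronglyMeasurable_condExp.mono hmm').measurable
  exact (((hX.measurable.sub (hcond X)).const_mul t).sub (hcond _).log).exp.stronglyMeasurable

theorem normalizedCenteredExp_ae_eq_div (hm : m ≤ m0) [SigmaFinite (μ.trim hm)]
    (hX : ∀ t, Integrable (fun ω => Real.exp (t * X ω)) μ) (t : ℝ) :
    normalizedCenteredExp μ m X t =ᵐ[μ] (μ[centeredExp μ m X t|m])⁻¹ * centeredExp μ m X t := by
  filter_upwards [one_le_condExp_centeredExp hm hX t] with ω hω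
  rw [normalizedCenteredExp, condCenteredCgf, Real.exp_sub,
    Real.exp_log (zero_lt_one.trans_le hω)]
  simp [centeredExp, div_eq_inv_mul]

theorem integrable_normalizedCenteredExp (hm : m ≤ m0) [SigmaFinite (μ.trim hm)]
    (hX : ∀ t, Integrable (fun ω => Real.exp (t * X ω)) μ) (t : ℝ) :
    Integrable (normalizedCenteredExp μ m X t) μ := by
  have hC := integrable_centeredExp hm hX t
  have hGinv : Measurable (μ[centeredExp μ m X t|m])⁻¹ :=
    (stronglyMeasurable_condExp.mono hm).measurable.inv
  refine (hC.mono' (hGinv.aestronglyMeasurable.mul hC.1) ?_).congr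
    (normalizedCenteredExp_ae_eq_div hm hX t).symm
  filter_upwards [one_le_condExp_centeredExp hm hX t] with ω hω
  have hC_pos : 0 < centeredExp μ m X t ω := Real.exp_pos _
  rw [Pi.mul_apply, Pi.inv_apply, norm_mul, norm_inv, Real.norm_of_nonneg hC_pos.le,
    Real.norm_of_nonneg (zero_le_one.trans hω)]
  exact mul_le_of_le_one_left hC_pos.le (inv_le_one_of_one_le₀ hω)

theorem condExp_normalizedCenteredExp (hm : m ≤ m0) [SigmaFinite (μ.trim hm)]
    (hX : ∀ t, Integrable (fun ω => Real.exp (t * X ω)) μ) (t : ℝ) :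
    μ[normalizedCenteredExp μ m X t|m] =ᵐ[μ] 1 := by
  have hdiv := normalizedCenteredExp_ae_eq_div hm hX t
  have hpull := condExp_mul_of_stronglyMeasurable_left
    (stronglyMeasurable_condExp (m := m) (μ := μ)
      (f := centeredExp μ m X t)).measurable.inv.stronglyMeasurable
    ((integrable_normalizedCenteredExp hm hX t).congr hdiv) (integrable_centeredExp hm hX t)
  filter_upwards [condExp_congr_ae hdiv, hpull, one_le_condExp_centeredExp hm hX t]
    with ω hcongr hpullω hω
  rw [hcongr, hpullω, Pi.mul_apply, Pi.inv_apply, inv_mul_cancel₀ (zero_lt_one.trans_le hω).ne',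
    Pi.one_apply]

end ExponentialMoments

theorem martingale_prod_normalizedCenteredExp [IsFiniteMeasure μ] {ℱ : Filtration ℕ m0}
    {X : ℕ → Ω → ℝ} (hX_meas : ∀ n, StronglyMeasurable[ℱ (n + 1)] (X n))
    (hX : ∀ n t, Integrable (fun ω => Real.exp (t * X n ω)) μ) (t : ℝ) :
    Martingale (fun K ω => ∏ i ∈ range K, normalizedCenteredExp μ (ℱ i) (X i) t ω) ℱ μ :=
  martingale_prod_of_condExp_eq_one
    (fun n => stronglyMeasurable_normalizedCenteredExp (ℱ.mono n.le_succ) (hX_meas n) t)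
    (fun _ ω => (normalizedCenteredExp_pos t ω).le)
    (fun n => integrable_normalizedCenteredExp (ℱ.le n) (hX n) t)
    (fun n => condExp_normalizedCenteredExp (ℱ.le n) (hX n) t)

end MeasureTheory

/-- Indices are shifted: `Z n`, `mu n`, `ψ n` stand for `Z_{n+1}`, `μ_{n+1}`, `ψ_{n+1}`, conditioned
on `ℱ n`. -/
theorem stmt_9_general {Ω : Type*} {m0 : MeasurableSpace Ω} (μ : Measure Ω) [IsProbabilityMeasure μ]
    (ℱ : Filtration ℕ m0) (Z mu : ℕ → Ω → ℝ) (ψ : ℕ → ℝ → Ω → ℝ)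
    (hadapted : ∀ n, Measurable[ℱ (n + 1)] (Z n))
    (hint : ∀ n, ∀ lam : ℝ, Integrable (fun ω => Real.exp (lam * Z n ω)) μ)
    (hmu : ∀ n, mu n =ᵐ[μ] μ[Z n | ℱ n])
    (hψ : ∀ n, ∀ lam : ℝ, ψ n lam =ᵐ[μ]
      fun ω => Real.log ((μ[fun ω' => Real.exp (lam * (Z n ω' - mu n ω')) | ℱ n]) ω))
    (x lam : ℝ) :
    ENNReal.ofReal (1 - Real.exp (-x)) ≤
      μ {ω | ∀ K : ℕ, ∑ i ∈ range K, lam * Z i ω ≤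
        x + ∑ i ∈ range K, (lam * mu i ω + ψ i lam ω)} := by
  have hmart := martingale_prod_normalizedCenteredExp (fun n => (hadapted n).stronglyMeasurable)
    hint lam
  refine (hmart.ofReal_one_sub_exp_neg_le_measure_forall_lt_exp
    (fun K ω => prod_nonneg fun i _ => (normalizedCenteredExp_pos lam ω).le) (by simp) x).trans
    (measure_mono_ae ?_)
  have hcgf : ∀ n, ψ n lam =ᵐ[μ] condCenteredCgf μ (ℱ n) (Z n) lam := fun n => by
    have hcentered : (fun ω => Real.exp (lam * (Z n ω - mu n ω))) =ᵐ[μ]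
        centeredExp μ (ℱ n) (Z n) lam := by
      filter_upwards [hmu n] with ω hω
      rw [centeredExp, hω]
    filter_upwards [hψ n lam, condExp_congr_ae (m := ℱ n) hcentered] with ω hψω hcondω
    rw [hψω, hcondω, condCenteredCgf]
  filter_upwards [ae_all_iff.2 hmu, ae_all_iff.2 hcgf] with ω hmuω hcgfω hlt K
  have hprod : ∏ i ∈ range K, normalizedCenteredExp μ (ℱ i) (Z i) lam ω =
      Real.exp (∑ i ∈ range K, lam * Z i ω - ∑ i ∈ range K, (lam * mu i ω + ψ i lam ω)) := by
    rw [← sum_sub_distrib, Real.exp_sum]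
    refine prod_congr rfl fun i _ => ?_
    rw [normalizedCenteredExp, hmuω i, hcgfω i]
    ring_nf
  have hltK : _ < Real.exp x := hlt K
  rw [hprod, Real.exp_lt_exp] at hltK
  linarith

/-- Uniform exponential-martingale concentration (Lemma 4 of Russo & Van Roy):
with probability at least `1 - e^{-x}`, simultaneously for all `K`,
`∑_{i=1}^K λ Z_i ≤ x + ∑_{i=1}^K (λ μ_i + ψ_i(λ))`.
Here `Z n`, `mu n`, `ψ n` stand for `Z_{n+1}`, `μ_{n+1}`, `ψ_{n+1}`, conditioned on `ℱ n`. -/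
theorem stmt_9 {Ω : Type*} {m0 : MeasurableSpace Ω} (μ : Measure Ω) [IsProbabilityMeasure μ]
    (ℱ : Filtration ℕ m0) (Z mu : ℕ → Ω → ℝ) (ψ : ℕ → ℝ → Ω → ℝ)
    (hadapted : ∀ n, Measurable[ℱ (n + 1)] (Z n))
    (hint : ∀ n, ∀ lam : ℝ, Integrable (fun ω => Real.exp (lam * Z n ω)) μ)
    (hmu : ∀ n, mu n =ᵐ[μ] μ[Z n | ℱ n])
    (hψ : ∀ n, ∀ lam : ℝ, ψ n lam =ᵐ[μ]
      fun ω => Real.log ((μ[fun ω' => Real.exp (lam * (Z n ω' - mu n ω')) | ℱ n]) ω))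
    (x lam : ℝ) (hx : 0 ≤ x) (hlam : 0 ≤ lam) :
    ENNReal.ofReal (1 - Real.exp (-x)) ≤
      μ {ω | ∀ K : ℕ, ∑ i ∈ range K, lam * Z i ω ≤
        x + ∑ i ∈ range K, (lam * mu i ω + ψ i lam ω)} :=
  stmt_9_general μ ℱ Z mu ψ hadapted hint hmu hψ x lam
end

section
/- If nonnegative random variables Δ_k ∈ [0, C] satisfy, on an event E, that for all ε > 0, ∑_{k=1}^∞ 1{Δ_k > ε} ≤ C₂/ε², then on E, for every K ∈ ℕ, the cumulative regret satisfies ∑_{k=1}^K Δ_k ≤ 2√(C₂·K) + C (deterministic conversion from uniform-PAC counting bounds to a sublinear regret bound). -/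
/-!
Remove the smallest value `f a` from a set of `n + 1` values: every `t ∈ (0, f a)` is exceeded
by all `n + 1` of them, so the counting bound forces `(n + 1) t² ≤ c`, i.e. `f a ≤ √(c / (n + 1))`.
Since `(√(n + 1))⁻¹ ≤ 2 (√(n + 1) - √n)`, induction on `n` gives `∑ f ≤ 2 √(c n)`.
The bound `ε K + C · C₂ / ε²` comes from `Δ_k ≤ ε + C · 1{Δ_k > ε}`.
-/

open Finset

lemma Real.inv_sqrt_add_one_le {x : ℝ} (hx : 0 ≤ x) :
    (√(x + 1))⁻¹ ≤ 2 * (√(x + 1) - √x) := by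
  have hs : 0 < √(x + 1) := Real.sqrt_pos.mpr (by linarith)
  have hs2 := Real.sq_sqrt (show 0 ≤ x + 1 by linarith)
  have hr2 := Real.sq_sqrt hx
  rw [inv_le_iff_one_le_mul₀' hs]
  nlinarith [sq_nonneg (√(x + 1) - √x)]

lemma le_sqrt_div_of_forall_lt {a c n : ℝ} (hn : 0 < n)
    (h : ∀ t, 0 < t → t < a → n ≤ c / t ^ 2) : a ≤ √(c / n) := by
  refine le_of_forall_lt_imp_le_of_dense fun t ht => ?_
  rcases le_or_gt t 0 with ht0 | ht0
  · exact ht0.trans (Real.sqrt_nonneg _)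
  · refine Real.le_sqrt_of_sq_le ?_
    rw [le_div_iff₀ hn, mul_comm]
    exact (le_div_iff₀ (by positivity)).mp (h t ht0 ht)

lemma Real.add_two_sqrt_mul_le_of_le_sqrt_div {a c n : ℝ} (hc : 0 ≤ c) (hn : 0 ≤ n)
    (ha : a ≤ √(c / (n + 1))) : a + 2 * √(c * n) ≤ 2 * √(c * (n + 1)) := by
  rw [Real.sqrt_div hc, div_eq_mul_inv] at ha
  rw [Real.sqrt_mul hc, Real.sqrt_mul hc]
  nlinarith [Real.inv_sqrt_add_one_le hn, Real.sqrt_nonneg c]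

lemma Finset.sum_le_two_sqrt_mul_card {ι : Type*} (f : ι → ℝ) (s : Finset ι) {c : ℝ}
    (hc : 0 ≤ c) (hcount : ∀ t > 0, (#{k ∈ s | t < f k} : ℝ) ≤ c / t ^ 2) :
    ∑ k ∈ s, f k ≤ 2 * √(c * #s) := by
  classical
  induction s using Finset.induction_on_min_value f with
  | empty => simp
  | insert a s ha hmin ih =>
    have hsub : ∀ t > 0, (#{k ∈ s | t < f k} : ℝ) ≤ c / t ^ 2 := fun t ht =>
      le_trans (by gcongr; exact subset_insert a s) (hcount t ht)
    have hfa : f a ≤ √(c / (#s + 1)) := by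
      refine le_sqrt_div_of_forall_lt (by positivity) fun t ht hta => ?_
      have hall : {k ∈ insert a s | t < f k} = insert a s :=
        filter_true_of_mem fun k hk => by
          rcases mem_insert.mp hk with rfl | hk
          exacts [hta, hta.trans_le (hmin k hk)]
      simpa [hall, card_insert_of_notMem ha] using hcount t ht
    rw [sum_insert ha, card_insert_of_notMem ha, Nat.cast_succ]
    linarith [Real.add_two_sqrt_mul_le_of_le_sqrt_div hc (Nat.cast_nonneg _) hfa, ih hsub]

lemma Finset.sum_le_mul_card_add_mul_card_lt {ι : Type*} (f : ι → ℝ) (s : Finset ι)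
    {C ε : ℝ} (hε : 0 ≤ ε) (hf : ∀ k ∈ s, f k ≤ C) :
    ∑ k ∈ s, f k ≤ ε * #s + C * #{k ∈ s | ε < f k} := by
  classical
  calc ∑ k ∈ s, f k ≤ ∑ k ∈ s, (ε + C * if ε < f k then 1 else 0) := by
        refine sum_le_sum fun k hk => ?_
        split_ifs with h
        · linarith [hf k hk]
        · linarith [not_lt.mp h]
    _ = ε * #s + C * #{k ∈ s | ε < f k} := by
        rw [sum_add_distrib, sum_const, ← mul_sum, sum_boole, nsmul_eq_mul, mul_comm]

/-- Deterministic conversion from a uniform-PAC counting bound to a sublinear regret bound: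
if `Δ_k ∈ [0, C]` and for all `ε > 0` the number of indices with `Δ_k > ε` is at most
`C₂/ε²`, then `∑_{k=1}^K Δ_k ≤ 2√(C₂ K) + C`, and more precisely
`∑_{k=1}^K Δ_k ≤ ε K + C · C₂/ε²` for every `ε > 0`. -/
theorem stmt_19 (Δ : ℕ → ℝ) (C C₂ : ℝ) (hC : 0 < C) (hC₂ : 0 < C₂)
    (hbd : ∀ k, Δ k ∈ Set.Icc (0 : ℝ) C)
    (hcount : ∀ ε > (0 : ℝ), ∀ K : ℕ,
      (∑ k ∈ Finset.Icc 1 K, (if Δ k > ε then (1 : ℝ) else 0)) ≤ C₂ / ε ^ 2) :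
    ∀ K : ℕ,
      ((∑ k ∈ Finset.Icc 1 K, Δ k) ≤ 2 * Real.sqrt (C₂ * K) + C) ∧
      (∀ ε > (0 : ℝ), (∑ k ∈ Finset.Icc 1 K, Δ k) ≤ ε * K + C * (C₂ / ε ^ 2)) := by
  intro K
  have hcard : ∀ ε > 0, (#{k ∈ Icc 1 K | ε < Δ k} : ℝ) ≤ C₂ / ε ^ 2 := fun ε hε => by
    simpa only [sum_boole, Nat.cast_id] using hcount ε hε K
  have hK : (#(Icc 1 K) : ℝ) = K := by simp
  refine ⟨?_, fun ε hε => ?_⟩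
  · calc ∑ k ∈ Icc 1 K, Δ k ≤ 2 * √(C₂ * #(Icc 1 K)) :=
          sum_le_two_sqrt_mul_card Δ _ hC₂.le hcard
      _ ≤ 2 * √(C₂ * K) + C := by rw [hK]; linarith
  · calc ∑ k ∈ Icc 1 K, Δ k ≤ ε * #(Icc 1 K) + C * #{k ∈ Icc 1 K | ε < Δ k} :=
          sum_le_mul_card_add_mul_card_lt Δ _ hε.le fun k _ => (hbd k).2
      _ ≤ ε * K + C * (C₂ / ε ^ 2) := by rw [hK]; gcongr; exact hcard ε hε
end
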